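/- Let u ≥ 1 and k ≥ 1 be integers and let X be a finite set of positive integers all at most u. Then X admits a (k, Δ)-halver with Δ = √(2·k·ln(2·(k+1)·(k·u+1))). In fact, the halver can be chosen so that for every subset S ⊆ X with |S| ≤ k there exists Ŝ ⊆ X with |Ŝ| = |S|, SUM(Ŝ) = SUM(S), and |Ŝ ∩ X'|, |Ŝ ∩ X''| ≤ |Ŝ|/2 + Δ. -/

import Mathlib

/-!
Split `X` by a subset `A ⊆ X`, counted over all `2 ^ |X|` choices. For a fixed `T` with
`|T| ≤ k`, the discrepancy `|T ∩ A| - |T \ A|` is a sum of `|T|` independent fair signs, so the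
exponential moment method with `cosh s ≤ exp (s ^ 2 / 2)` bounds the number of `A` with
discrepancy above `t` by `2 · 2 ^ |X| · exp (-t ^ 2 / 2k)`. A set `S` with `|S| ≤ k` only matters
through the pair `(|S|, SUM S)`, of which there are at most `(k + 1)(ku + 1)`; fixing one
representative per pair, a union bound with `t = 2Δ` leaves some `A` that is balanced on every
representative, and the representative of `S` serves as `Ŝ`.
-/

def SUM (S : Finset ℕ) : ℕ := S.sum id

open Finset Real

variable {α : Type*} [DecidableEq α]

def discrepancy (T A : Finset α) : ℝ := #(T ∩ A) - #(T \ A)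

theorem sum_powerset_exp_mul_discrepancy {X T : Finset α} (hT : T ⊆ X) (s : ℝ) :
    ∑ A ∈ X.powerset, exp (s * discrepancy T A) = 2 ^ #(X \ T) * (2 * cosh s) ^ #T := by
  have hprod : ∏ x ∈ X, ((if x ∈ T then exp s else 1) + if x ∈ T then exp (-s) else 1) =
      2 ^ #(X \ T) * (2 * cosh s) ^ #T := by
    have hout : ∀ x ∈ X \ T, ((if x ∈ T then exp s else 1) + if x ∈ T then exp (-s) else 1) = 2 :=
      fun x hx => by norm_num [(mem_sdiff.1 hx).2]
    have hin : ∀ x ∈ T, ((if x ∈ T then exp s else 1) + if x ∈ T then exp (-s) else 1) =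
        2 * cosh s := fun x hx => by rw [if_pos hx, if_pos hx, cosh_eq]; ring
    rw [← prod_sdiff hT, prod_congr rfl hout, prod_congr rfl hin, prod_const, prod_const]
  -- In the expansion of the product, `A` picks `exp s` on `T ∩ A` and `exp (-s)` on `T \ A`.
  rw [← hprod, prod_add]
  refine sum_congr rfl fun A hA => ?_
  have hdiff : (X \ A) ∩ T = T \ A := by
    rw [inter_comm, ← inter_sdiff_assoc, inter_eq_left.2 hT]
  rw [prod_ite_mem, prod_ite_mem, prod_const, prod_const, inter_comm, hdiff, ← exp_nat_mul,
    ← exp_nat_mul, ← exp_add, discrepancy]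
  ring_nf

theorem exp_mul_le_exp_add_exp_neg {s t d : ℝ} (hs : 0 ≤ s) (htd : t ≤ |d|) :
    exp (s * t) ≤ exp (s * d) + exp (-(s * d)) := by
  rcases abs_cases d with ⟨hd, -⟩ | ⟨hd, -⟩
  · have := exp_le_exp.2 (mul_le_mul_of_nonneg_left (hd ▸ htd) hs)
    linarith [exp_pos (-(s * d))]
  · have := exp_le_exp.2 (mul_le_mul_of_nonneg_left (hd ▸ htd) hs)
    rw [mul_neg] at this
    linarith [exp_pos (s * d)]

theorem card_abs_discrepancy_gt_mul_exp_le {X T : Finset α} (hT : T ⊆ X) {s : ℝ} (hs : 0 ≤ s)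
    (t : ℝ) :
    #{A ∈ X.powerset | t < |discrepancy T A|} * exp (s * t) ≤
      2 * 2 ^ #X * exp (#T * s ^ 2 / 2) := by
  calc (#{A ∈ X.powerset | t < |discrepancy T A|} : ℝ) * exp (s * t)
      = ∑ A ∈ X.powerset with t < |discrepancy T A|, exp (s * t) := by
        rw [sum_const, nsmul_eq_mul]
    _ ≤ ∑ A ∈ X.powerset, (exp (s * discrepancy T A) + exp (-s * discrepancy T A)) := by
        refine sum_le_sum_of_subset_of_nonneg (filter_subset _ _) (fun A _ _ => by positivity)
          |>.trans' (sum_le_sum fun A hA => ?_)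
        rw [neg_mul]
        exact exp_mul_le_exp_add_exp_neg hs (mem_filter.1 hA).2.le
    _ = 2 * 2 ^ #(X \ T) * (2 * cosh s) ^ #T := by
        rw [sum_add_distrib, sum_powerset_exp_mul_discrepancy hT,
          sum_powerset_exp_mul_discrepancy hT, cosh_neg]
        ring
    _ ≤ 2 * 2 ^ #(X \ T) * (2 * exp (s ^ 2 / 2)) ^ #T := by
        gcongr
        exact cosh_le_exp_half_sq s
    _ = 2 * 2 ^ #X * exp (#T * s ^ 2 / 2) := by
        rw [mul_pow, ← exp_nat_mul, ← card_sdiff_add_card_eq_card hT, pow_add]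
        ring_nf

theorem card_abs_discrepancy_gt_le {X T : Finset α} (hT : T ⊆ X) {k : ℕ} (hk : 0 < k)
    (hTk : #T ≤ k) {t : ℝ} (ht : 0 ≤ t) :
    (#{A ∈ X.powerset | t < |discrepancy T A|} : ℝ) ≤ 2 * 2 ^ #X * exp (-t ^ 2 / (2 * k)) := by
  have hkR : (0 : ℝ) < k := Nat.cast_pos.2 hk
  have hmarkov := card_abs_discrepancy_gt_mul_exp_le hT (div_nonneg ht hkR.le) t
  have hexponent : #T * (t / k) ^ 2 / 2 - t / k * t ≤ -t ^ 2 / (2 * k) := by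
    have : (#T : ℝ) * (t / k) ^ 2 ≤ k * (t / k) ^ 2 := by gcongr
    have hk' : (k : ℝ) * (t / k) ^ 2 = t ^ 2 / k := by field_simp
    have : -t ^ 2 / (2 * k) = t ^ 2 / k / 2 - t / k * t := by field_simp; ring
    linarith
  calc (#{A ∈ X.powerset | t < |discrepancy T A|} : ℝ)
      = #{A ∈ X.powerset | t < |discrepancy T A|} * exp (t / k * t) * exp (-(t / k * t)) := by
        rw [mul_assoc, ← exp_add, add_neg_cancel, exp_zero, mul_one]
    _ ≤ 2 * 2 ^ #X * exp (#T * (t / k) ^ 2 / 2) * exp (-(t / k * t)) :=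
        mul_le_mul_of_nonneg_right hmarkov (exp_pos _).le
    _ = 2 * 2 ^ #X * exp (#T * (t / k) ^ 2 / 2 - t / k * t) := by
        rw [mul_assoc, ← exp_add, sub_eq_add_neg]
    _ ≤ 2 * 2 ^ #X * exp (-t ^ 2 / (2 * k)) := by gcongr

theorem exists_subset_forall_abs_discrepancy_le {X : Finset α} (𝒯 : Finset (Finset α)) {k : ℕ}
    (hk : 0 < k) (h𝒯 : ∀ T ∈ 𝒯, T ⊆ X ∧ #T ≤ k) {t : ℝ} (ht : 0 ≤ t)
    (hsmall : 2 * #𝒯 * exp (-t ^ 2 / (2 * k)) < 1) :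
    ∃ A ⊆ X, ∀ T ∈ 𝒯, |discrepancy T A| ≤ t := by
  by_contra! hbad
  have hcover : X.powerset ⊆ 𝒯.biUnion fun T => {A ∈ X.powerset | t < |discrepancy T A|} :=
    fun A hA => by
      obtain ⟨T, hT, hTA⟩ := hbad A (mem_powerset.1 hA)
      exact mem_biUnion.2 ⟨T, hT, mem_filter.2 ⟨hA, hTA⟩⟩
  have hcount : (2 : ℝ) ^ #X ≤ #𝒯 * (2 * 2 ^ #X * exp (-t ^ 2 / (2 * k))) := by
    calc (2 : ℝ) ^ #X = #X.powerset := by rw [card_powerset]; push_cast; rfl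
      _ ≤ ∑ T ∈ 𝒯, (#{A ∈ X.powerset | t < |discrepancy T A|} : ℝ) := by
        exact_mod_cast (card_le_card hcover).trans card_biUnion_le
      _ ≤ #𝒯 * (2 * 2 ^ #X * exp (-t ^ 2 / (2 * k))) := by
        rw [← nsmul_eq_mul]
        exact sum_le_card_nsmul _ _ _ fun T hT =>
          card_abs_discrepancy_gt_le (h𝒯 T hT).1 hk (h𝒯 T hT).2 ht
  have : (0 : ℝ) < 2 ^ #X := by positivity
  nlinarith

theorem card_inter_le_and_card_sdiff_le {T A : Finset α} {Δ : ℝ}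
    (h : |discrepancy T A| ≤ 2 * Δ) :
    (#(T ∩ A) : ℝ) ≤ #T / 2 + Δ ∧ (#(T \ A) : ℝ) ≤ #T / 2 + Δ := by
  have hsplit : (#(T ∩ A) : ℝ) + #(T \ A) = #T := by exact_mod_cast card_inter_add_card_sdiff T A
  rw [discrepancy, abs_le] at h
  constructor <;> linarith [h.1, h.2]

theorem card_image_card_sum_le {X : Finset ℕ} {u : ℕ} (hX : ∀ x ∈ X, x ≤ u) (k : ℕ) :
    #({S ∈ X.powerset | #S ≤ k}.image fun S => (#S, SUM S)) ≤ (k + 1) * (k * u + 1) := by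
  calc #({S ∈ X.powerset | #S ≤ k}.image fun S => (#S, SUM S))
      ≤ #(range (k + 1) ×ˢ range (k * u + 1)) := by
        refine card_le_card fun p hp => ?_
        obtain ⟨S, hS, rfl⟩ := mem_image.1 hp
        obtain ⟨hSX, hSk⟩ := mem_filter.1 hS
        have hsum : SUM S ≤ #S * u := by
          simpa [SUM] using sum_le_card_nsmul S id u fun x hx => hX x (mem_powerset.1 hSX hx)
        simp only [mem_product, mem_range]
        exact ⟨by omega, by nlinarith⟩
    _ = (k + 1) * (k * u + 1) := by rw [card_product, card_range, card_range]

theorem two_mul_exp_neg_lt_one {N k : ℕ} {M : ℝ} (hk : 0 < k) (hM : 1 < M) (hN : 2 * N ≤ M) :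
    2 * N * exp (-(2 * √(2 * k * log M)) ^ 2 / (2 * k)) < 1 := by
  have hkR : (0 : ℝ) < k := Nat.cast_pos.2 hk
  have hM0 : 0 < M := by linarith
  have hexp : exp (-(2 * √(2 * k * log M)) ^ 2 / (2 * k)) = (M ^ 4)⁻¹ := by
    rw [mul_pow, sq_sqrt (by positivity [log_pos hM]), ← exp_log (pow_pos hM0 4), ← exp_neg,
      log_pow]
    congr 1
    field_simp
    ring
  rw [hexp]
  calc 2 * N * (M ^ 4)⁻¹ ≤ M * (M ^ 4)⁻¹ := by gcongr
    _ = (M ^ 3)⁻¹ := by field_simp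
    _ < 1 := inv_lt_one_of_one_lt₀ (one_lt_pow₀ hM (by norm_num))

theorem stmt_3 (u k : ℕ) (hk : 1 ≤ k) (X : Finset ℕ)
    (hX : ∀ x ∈ X, x ∈ Finset.Icc 1 u) :
    ∃ X' X'' : Finset ℕ, X' ∪ X'' = X ∧ Disjoint X' X'' ∧
      ∀ S ⊆ X, S.card ≤ k →
        ∃ Shat ⊆ X, Shat.card = S.card ∧ SUM Shat = SUM S ∧
          ((Shat ∩ X').card : ℝ) ≤ (Shat.card : ℝ) / 2 +
              Real.sqrt (2 * (k : ℝ) * Real.log (2 * ((k : ℝ) + 1) * ((k : ℝ) * (u : ℝ) + 1))) ∧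
          ((Shat ∩ X'').card : ℝ) ≤ (Shat.card : ℝ) / 2 +
              Real.sqrt (2 * (k : ℝ) * Real.log (2 * ((k : ℝ) + 1) * ((k : ℝ) * (u : ℝ) + 1))) := by
  set key : Finset ℕ → ℕ × ℕ := fun S => (#S, SUM S)
  set 𝒮 := {S ∈ X.powerset | #S ≤ k}
  choose! rep hrep𝒮 hrepkey using fun p (hp : p ∈ 𝒮.image key) => mem_image.1 hp
  set 𝒯 := (𝒮.image key).image rep
  have hM : (1 : ℝ) < 2 * ((k : ℝ) + 1) * ((k : ℝ) * u + 1) := by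
    have : (1 : ℝ) ≤ k := Nat.one_le_cast.2 hk
    nlinarith [(by positivity : (0 : ℝ) ≤ k * u)]
  have h𝒯 : 2 * (#𝒯 : ℝ) ≤ 2 * ((k : ℝ) + 1) * ((k : ℝ) * u + 1) := by
    have : #𝒯 ≤ _ := card_image_le.trans <|
      card_image_card_sum_le (fun x hx => (mem_Icc.1 (hX x hx)).2) k
    rw [mul_assoc]
    exact_mod_cast Nat.mul_le_mul_left 2 this
  have hsmall := two_mul_exp_neg_lt_one hk hM h𝒯
  obtain ⟨A, hAX, hA⟩ := exists_subset_forall_abs_discrepancy_le _ hk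
    (fun T hT => by
      obtain ⟨p, hp, rfl⟩ := mem_image.1 hT
      exact (mem_filter.1 (hrep𝒮 p hp)).imp_left mem_powerset.1)
    (by positivity) hsmall
  refine ⟨A, X \ A, union_sdiff_of_subset hAX, disjoint_sdiff, fun S hSX hSk => ?_⟩
  have hS : key S ∈ 𝒮.image key := mem_image_of_mem key (mem_filter.2 ⟨mem_powerset.2 hSX, hSk⟩)
  obtain ⟨hrepX, -⟩ := mem_filter.1 (hrep𝒮 _ hS)
  obtain ⟨hcard, hsum⟩ := Prod.ext_iff.1 (hrepkey _ hS)
  refine ⟨rep (key S), mem_powerset.1 hrepX, hcard, hsum, ?_⟩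
  rw [← inter_sdiff_assoc, inter_eq_left.2 (mem_powerset.1 hrepX)]
  exact card_inter_le_and_card_sdiff_le (hA _ (mem_image_of_mem rep hS))
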